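/- arXiv:2406.15084 — 2 statements merged into one kernel-verified Lean document; each statement's English description precedes it below -/
import Mathlib

section
/- Deletion-contraction for φ: let G be a finite simple graph and e = {u₀, v₀} an edge of G. Then φ(G) = -φ(G - e) + (1/4)·φ(G'), where G - e is G with edge e deleted, and G' is obtained from G by deleting both u₀ and v₀ and adding a new vertex adjacent exactly to those vertices of G \ {u₀,v₀} that were adjacent to exactly one of u₀, v₀ (the symmetric difference of the neighborhoods). -/
open Finset

variable {V : Type*} [Fintype V] [DecidableEq V]

/-- Number of proper 3-colorings of the spanning subgraph with edge set `E'`. -/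
def chi3E (V : Type*) [Fintype V] [DecidableEq V] (E' : Finset (Sym2 V)) : ℕ :=
  (Finset.univ.filter (fun c : V → Fin 3 =>
    ∀ e ∈ E', ∀ u ∈ e, ∀ v ∈ e, u ≠ v → c u ≠ c v)).card

/-- The invariant φ. -/
def phi (G : SimpleGraph V) [DecidableRel G.Adj] : ℚ :=
  ((2 : ℚ) ^ (3 * Fintype.card V))⁻¹ *
    ∑ E' ∈ G.edgeFinset.powerset, (-2 : ℚ) ^ E'.card * chi3E V E'

/-- Symmetric-difference contraction of the pair `u₀, v₀`: delete `u₀` and `v₀` and add a new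
vertex (`none`) adjacent exactly to those remaining vertices adjacent to exactly one of
`u₀`, `v₀`. -/
def contractSD (G : SimpleGraph V) (u₀ v₀ : V) :
    SimpleGraph (Option {x : V // x ≠ u₀ ∧ x ≠ v₀}) where
  Adj x y :=
    match x, y with
    | some a, some b => G.Adj a.1 b.1
    | some a, none => Xor' (G.Adj a.1 u₀) (G.Adj a.1 v₀)
    | none, some b => Xor' (G.Adj b.1 u₀) (G.Adj b.1 v₀)
    | none, none => False
  symm := by
    refine ⟨?_⟩
    rintro (_ | a) (_ | b) h
    · exact h
    · exact h
    · exact h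
    · exact G.adj_symm h
  loopless := by
    refine ⟨?_⟩
    rintro (_ | a) h
    · exact h
    · exact G.irrefl h

instance (G : SimpleGraph V) [DecidableRel G.Adj] (u₀ v₀ : V) :
    DecidableRel (contractSD G u₀ v₀).Adj := fun x y =>
  match x, y with
  | some a, some b => inferInstanceAs (Decidable (G.Adj a.1 b.1))
  | some a, none => inferInstanceAs (Decidable ((G.Adj a.1 u₀ ∧ ¬ G.Adj a.1 v₀) ∨ (G.Adj a.1 v₀ ∧ ¬ G.Adj a.1 u₀)))
  | none, some b => inferInstanceAs (Decidable ((G.Adj b.1 u₀ ∧ ¬ G.Adj b.1 v₀) ∨ (G.Adj b.1 v₀ ∧ ¬ G.Adj b.1 u₀)))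
  | none, none => inferInstanceAs (Decidable False)

instance (G : SimpleGraph V) [DecidableRel G.Adj] (u₀ v₀ : V) :
    DecidableRel (G.deleteEdges {s(u₀, v₀)}).Adj := fun a b =>
  decidable_of_iff (G.Adj a b ∧ ¬ s(a, b) = s(u₀, v₀)) (by
    rw [SimpleGraph.deleteEdges_adj]; simp)

/-! ### Auxiliary machinery -/

instance instDecidableXorPrime {a b : Prop} [Decidable a] [Decidable b] : Decidable (Xor' a b) :=
  inferInstanceAs (Decidable (Xor a b))

set_option linter.unusedSectionVars false

/-- The `±1` weight of an edge for a fixed coloring. -/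
def ww (c : V → Fin 3) (e : Sym2 V) : ℚ :=
  if (∀ u ∈ e, ∀ v ∈ e, u ≠ v → c u ≠ c v) then -1 else 1

lemma ww_mk (c : V → Fin 3) {x y : V} (hxy : x ≠ y) :
    ww c s(x,y) = if c x = c y then 1 else -1 := by
  unfold ww
  by_cases h : c x = c y
  · rw [if_neg, if_pos h]
    push_neg
    exact ⟨x, by simp, y, by simp, hxy, h⟩
  · rw [if_pos, if_neg h]
    intro u hu v hv huv
    rw [Sym2.mem_iff] at hu hv
    rcases hu with rfl|rfl <;> rcases hv with rfl|rfl <;> simp_all [eq_comm, Ne.symm h]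

lemma sum_expand (E : Finset (Sym2 V)) :
    ∑ E' ∈ E.powerset, (-2 : ℚ) ^ E'.card * chi3E V E'
      = ∑ c : V → Fin 3, ∏ e ∈ E, ww c e := by
  have h1 : ∀ E' : Finset (Sym2 V), (chi3E V E' : ℚ) =
      ∑ c : V → Fin 3, ∏ e ∈ E',
        (if (∀ u ∈ e, ∀ v ∈ e, u ≠ v → c u ≠ c v) then (1:ℚ) else 0) := by
    intro E'
    rw [chi3E, card_filter]
    push_cast
    refine Finset.sum_congr rfl fun c _ => ?_
    rw [Finset.prod_boole]
    congr 1
  calc ∑ E' ∈ E.powerset, (-2 : ℚ) ^ E'.card * chi3E V E'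
      = ∑ E' ∈ E.powerset, ∑ c : V → Fin 3, ∏ e ∈ E',
          ((-2 : ℚ) * if (∀ u ∈ e, ∀ v ∈ e, u ≠ v → c u ≠ c v) then (1:ℚ) else 0) := by
        refine Finset.sum_congr rfl fun E' _ => ?_
        rw [h1, Finset.mul_sum]
        refine Finset.sum_congr rfl fun c _ => ?_
        rw [Finset.prod_mul_distrib, Finset.prod_const]
    _ = ∑ c : V → Fin 3, ∑ E' ∈ E.powerset, ∏ e ∈ E',
          ((-2 : ℚ) * if (∀ u ∈ e, ∀ v ∈ e, u ≠ v → c u ≠ c v) then (1:ℚ) else 0) :=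
        Finset.sum_comm
    _ = ∑ c : V → Fin 3, ∏ e ∈ E, ww c e := by
        refine Finset.sum_congr rfl fun c _ => ?_
        have := Finset.prod_add
          (fun e => (-2 : ℚ) * if (∀ u ∈ e, ∀ v ∈ e, u ≠ v → c u ≠ c v) then (1:ℚ) else 0)
          (fun _ => (1:ℚ)) E
        simp only [Finset.prod_const_one, mul_one] at this
        rw [← this]
        refine Finset.prod_congr rfl fun e _ => ?_
        unfold ww
        split <;> ring

lemma phi_eq (G : SimpleGraph V) [DecidableRel G.Adj] :
    phi G = ((2 : ℚ) ^ (3 * Fintype.card V))⁻¹ *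
      ∑ c : V → Fin 3, ∏ e ∈ G.edgeFinset, ww c e := by
  rw [phi, sum_expand]

lemma edgeFinset_filter_mem (H : SimpleGraph V) [DecidableRel H.Adj] (v : V) :
    H.edgeFinset.filter (fun e => v ∈ e) = (H.neighborFinset v).image (fun b => s(v,b)) := by
  ext e
  induction e with
  | _ a b =>
    simp only [mem_filter, SimpleGraph.mem_edgeFinset, SimpleGraph.mem_edgeSet, Sym2.mem_iff,
      mem_image, SimpleGraph.mem_neighborFinset]
    constructor
    · rintro ⟨hab, (rfl|rfl)⟩
      · exact ⟨b, hab, rfl⟩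
      · exact ⟨a, hab.symm, Sym2.eq_swap⟩
    · rintro ⟨x, hx, hxe⟩
      rw [Sym2.eq_iff] at hxe
      rcases hxe with ⟨rfl, rfl⟩ | ⟨rfl, rfl⟩
      · exact ⟨hx, Or.inl rfl⟩
      · exact ⟨hx.symm, Or.inr rfl⟩

lemma prod_edges_at (H : SimpleGraph V) [DecidableRel H.Adj] (v : V) (c : V → Fin 3) :
    ∏ e ∈ H.edgeFinset.filter (fun e => v ∈ e), ww c e
      = ∏ b ∈ H.neighborFinset v, (if c v = c b then (1:ℚ) else -1) := by
  rw [edgeFinset_filter_mem, Finset.prod_image]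
  · exact Finset.prod_congr rfl fun b hb =>
      ww_mk c ((H.mem_neighborFinset v b).mp hb).ne
  · intro x _ y _ hxy
    exact Sym2.congr_right.mp hxy

section Main

variable (G : SimpleGraph V) [DecidableRel G.Adj] (u₀ v₀ : V)

@[simp] lemma contractSD_adj_some_some (a b : {x : V // x ≠ u₀ ∧ x ≠ v₀}) :
    (contractSD G u₀ v₀).Adj (some a) (some b) ↔ G.Adj a.1 b.1 := Iff.rfl

@[simp] lemma contractSD_adj_none_some (b : {x : V // x ≠ u₀ ∧ x ≠ v₀}) :
    (contractSD G u₀ v₀).Adj none (some b) ↔ Xor' (G.Adj b.1 u₀) (G.Adj b.1 v₀) := Iff.rfl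

lemma neighborFinset_none :
    (contractSD G u₀ v₀).neighborFinset none
      = (univ.filter (fun b : {x : V // x ≠ u₀ ∧ x ≠ v₀} =>
          Xor' (G.Adj b.1 u₀) (G.Adj b.1 v₀))).image some := by
  ext x
  rcases x with _ | b
  · simp [SimpleGraph.mem_neighborFinset]
  · simp [SimpleGraph.mem_neighborFinset]

/-- The canonical map from the contracted vertex type back to `V`. -/
def fup : Option {x : V // x ≠ u₀ ∧ x ≠ v₀} → V := fun o => o.elim u₀ Subtype.val

lemma rest_image :
    ((contractSD G u₀ v₀).edgeFinset.filter (fun e => ¬ (none ∈ e))).image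
        (Sym2.map (fup u₀ v₀))
      = G.edgeFinset.filter (fun e => ¬ u₀ ∈ e ∧ ¬ v₀ ∈ e) := by
  ext e
  simp only [mem_image, mem_filter, SimpleGraph.mem_edgeFinset, SimpleGraph.mem_edgeSet]
  constructor
  · rintro ⟨e', ⟨hadj, hnone⟩, rfl⟩
    induction e' with
    | _ x y =>
      rcases x with _ | a
      · exact absurd (by simp) hnone
      rcases y with _ | b
      · exact absurd (by simp) hnone
      refine ⟨hadj, ?_, ?_⟩ <;>
        simp [fup, Sym2.mem_iff, Ne.symm a.2.1, Ne.symm b.2.1, Ne.symm a.2.2, Ne.symm b.2.2]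
  · induction e with
    | _ a b =>
      rintro ⟨hadj, hu, hv⟩
      rw [Sym2.mem_iff] at hu hv
      push_neg at hu hv
      refine ⟨s(some ⟨a, Ne.symm hu.1, Ne.symm hv.1⟩, some ⟨b, Ne.symm hu.2, Ne.symm hv.2⟩),
        ⟨hadj, ?_⟩, rfl⟩
      simp

lemma rest_injOn :
    Set.InjOn (Sym2.map (fup u₀ v₀))
      ((contractSD G u₀ v₀).edgeFinset.filter (fun e => ¬ (none ∈ e)) : Finset _) := by
  rintro e₁ h₁ e₂ h₂ heq
  simp only [coe_filter, Set.mem_setOf_eq] at h₁ h₂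
  induction e₁ with
  | _ x y =>
    induction e₂ with
    | _ z w =>
      rcases x with _ | a; · exact absurd (by simp) h₁.2
      rcases y with _ | b; · exact absurd (by simp) h₁.2
      rcases z with _ | a'; · exact absurd (by simp) h₂.2
      rcases w with _ | b'; · exact absurd (by simp) h₂.2
      simp only [Sym2.map_pair_eq, Sym2.eq_iff, fup, Option.elim] at heq ⊢
      rcases heq with ⟨h1, h2⟩ | ⟨h1, h2⟩
      · exact Or.inl ⟨by simp [Subtype.ext h1], by simp [Subtype.ext h2]⟩
      · exact Or.inr ⟨by simp [Subtype.ext h1], by simp [Subtype.ext h2]⟩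

lemma nbr_prod (f : V → ℚ) (hf : ∀ b, f b * f b = 1) :
    (∏ b ∈ (G.neighborFinset u₀).erase v₀, f b) *
        ∏ b ∈ (G.neighborFinset v₀).erase u₀, f b
      = ∏ b ∈ univ.filter (fun b => b ≠ u₀ ∧ b ≠ v₀ ∧ Xor' (G.Adj b u₀) (G.Adj b v₀)), f b := by
  classical
  set Nu := (G.neighborFinset u₀).erase v₀ with hNu
  set Nv := (G.neighborFinset v₀).erase u₀ with hNv
  rw [← Finset.prod_filter_mul_prod_filter_not Nu (fun b => G.Adj v₀ b) f,
      ← Finset.prod_filter_mul_prod_filter_not Nv (fun b => G.Adj u₀ b) f]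
  have hI : Nu.filter (fun b => G.Adj v₀ b) = Nv.filter (fun b => G.Adj u₀ b) := by
    ext b
    simp only [hNu, hNv, mem_filter, mem_erase, SimpleGraph.mem_neighborFinset]
    constructor
    · rintro ⟨⟨hbv, hu⟩, hv⟩
      exact ⟨⟨hu.ne', hv⟩, hu⟩
    · rintro ⟨⟨hbu, hv⟩, hu⟩
      exact ⟨⟨hv.ne', hu⟩, hv⟩
  have hsq : (∏ b ∈ Nu.filter (fun b => G.Adj v₀ b), f b) *
      ∏ b ∈ Nv.filter (fun b => G.Adj u₀ b), f b = 1 := by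
    rw [← hI, ← Finset.prod_mul_distrib]
    exact Finset.prod_eq_one fun b _ => hf b
  have hdisj : Disjoint (Nu.filter (fun b => ¬ G.Adj v₀ b))
      (Nv.filter (fun b => ¬ G.Adj u₀ b)) := by
    rw [Finset.disjoint_left]
    intro b hb hb'
    simp only [hNu, hNv, mem_filter, mem_erase, SimpleGraph.mem_neighborFinset] at hb hb'
    exact hb'.2 hb.1.2
  have hunion : Nu.filter (fun b => ¬ G.Adj v₀ b) ∪ Nv.filter (fun b => ¬ G.Adj u₀ b)
      = univ.filter (fun b => b ≠ u₀ ∧ b ≠ v₀ ∧ Xor' (G.Adj b u₀) (G.Adj b v₀)) := by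
    ext b
    simp only [hNu, hNv, mem_union, mem_filter, mem_erase, SimpleGraph.mem_neighborFinset,
      mem_univ, true_and]
    constructor
    · rintro (⟨⟨hbv, hu⟩, hnv⟩ | ⟨⟨hbu, hv⟩, hnu⟩)
      · exact ⟨hu.ne', hbv, Or.inl ⟨hu.symm, fun hb => hnv hb.symm⟩⟩
      · exact ⟨hbu, hv.ne', Or.inr ⟨hv.symm, fun hb => hnu hb.symm⟩⟩
    · rintro ⟨hbu, hbv, (⟨h1, h2⟩ | ⟨h1, h2⟩)⟩
      · exact Or.inl ⟨⟨hbv, h1.symm⟩, fun hb => h2 hb.symm⟩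
      · exact Or.inr ⟨⟨hbu, h1.symm⟩, fun hb => h2 hb.symm⟩
  calc (∏ b ∈ Nu.filter (fun b => G.Adj v₀ b), f b) *
          (∏ b ∈ Nu.filter (fun b => ¬ G.Adj v₀ b), f b) *
        ((∏ b ∈ Nv.filter (fun b => G.Adj u₀ b), f b) *
          ∏ b ∈ Nv.filter (fun b => ¬ G.Adj u₀ b), f b)
      = ((∏ b ∈ Nu.filter (fun b => G.Adj v₀ b), f b) *
          ∏ b ∈ Nv.filter (fun b => G.Adj u₀ b), f b) *
        ((∏ b ∈ Nu.filter (fun b => ¬ G.Adj v₀ b), f b) *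
          ∏ b ∈ Nv.filter (fun b => ¬ G.Adj u₀ b), f b) := by ring
    _ = (∏ b ∈ Nu.filter (fun b => ¬ G.Adj v₀ b), f b) *
          ∏ b ∈ Nv.filter (fun b => ¬ G.Adj u₀ b), f b := by rw [hsq, one_mul]
    _ = ∏ b ∈ univ.filter (fun b => b ≠ u₀ ∧ b ≠ v₀ ∧ Xor' (G.Adj b u₀) (G.Adj b v₀)), f b := by
          rw [← Finset.prod_union hdisj, hunion]

lemma image_val_xor :
    (univ.filter (fun b : {x : V // x ≠ u₀ ∧ x ≠ v₀} =>
        Xor' (G.Adj b.1 u₀) (G.Adj b.1 v₀))).image Subtype.val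
      = univ.filter (fun b => b ≠ u₀ ∧ b ≠ v₀ ∧ Xor' (G.Adj b u₀) (G.Adj b v₀)) := by
  ext b
  simp only [mem_image, mem_filter, mem_univ, true_and, Subtype.exists]
  constructor
  · rintro ⟨x, ⟨hx1, hx2⟩, hxor, rfl⟩
    exact ⟨hx1, hx2, hxor⟩
  · rintro ⟨h1, h2, hxor⟩
    exact ⟨b, ⟨h1, h2⟩, hxor, rfl⟩

/-- Restriction of a coloring to the contracted vertex set. -/
def resc (c : V → Fin 3) : Option {x : V // x ≠ u₀ ∧ x ≠ v₀} → Fin 3 :=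
  fun o => o.elim (c u₀) (fun a => c a.1)

/-- Extension of a coloring of the contracted vertex set to `V`. -/
def extc (c' : Option {x : V // x ≠ u₀ ∧ x ≠ v₀} → Fin 3) : V → Fin 3 :=
  fun v => if h : v = u₀ ∨ v = v₀ then c' none else c' (some ⟨v, not_or.mp h⟩)

lemma deleteEdges_nbr_u (h : G.Adj u₀ v₀) :
    (G.deleteEdges {s(u₀, v₀)}).neighborFinset u₀ = (G.neighborFinset u₀).erase v₀ := by
  ext b
  simp only [SimpleGraph.mem_neighborFinset, SimpleGraph.deleteEdges_adj, mem_erase,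
    Set.mem_singleton_iff, Sym2.congr_right]
  tauto

lemma deleteEdges_nbr_v (h : G.Adj u₀ v₀) :
    (G.deleteEdges {s(u₀, v₀)}).neighborFinset v₀ = (G.neighborFinset v₀).erase u₀ := by
  ext b
  simp only [SimpleGraph.mem_neighborFinset, SimpleGraph.deleteEdges_adj, mem_erase,
    Set.mem_singleton_iff]
  have : s(v₀, b) = s(u₀, v₀) ↔ b = u₀ := by
    rw [Sym2.eq_iff]
    constructor
    · rintro (⟨h1, rfl⟩ | ⟨-, rfl⟩)
      · exact absurd h1.symm h.ne
      · rfl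
    · rintro rfl; exact Or.inr ⟨rfl, rfl⟩
  rw [this]
  tauto

lemma prod_key (h : G.Adj u₀ v₀) (c : V → Fin 3) (hc : c u₀ = c v₀) :
    ∏ e ∈ (G.deleteEdges {s(u₀,v₀)}).edgeFinset, ww c e
      = ∏ e ∈ (contractSD G u₀ v₀).edgeFinset, ww (resc u₀ v₀ c) e := by
  classical
  -- split the H side
  rw [← Finset.prod_filter_mul_prod_filter_not (G.deleteEdges {s(u₀,v₀)}).edgeFinset (fun e => u₀ ∈ e) (ww c),
      ← Finset.prod_filter_mul_prod_filter_not ((G.deleteEdges {s(u₀,v₀)}).edgeFinset.filter (fun e => ¬ u₀ ∈ e))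
        (fun e => v₀ ∈ e) (ww c), Finset.filter_filter, Finset.filter_filter]
  have hv_filter : (G.deleteEdges {s(u₀,v₀)}).edgeFinset.filter (fun e => ¬ u₀ ∈ e ∧ v₀ ∈ e)
      = (G.deleteEdges {s(u₀,v₀)}).edgeFinset.filter (fun e => v₀ ∈ e) := by
    ext e
    simp only [mem_filter]
    refine ⟨fun ⟨he, _, hv⟩ => ⟨he, hv⟩, fun ⟨he, hv⟩ => ⟨he, fun hu => ?_, hv⟩⟩
    have he₀ : e = s(u₀, v₀) := ((Sym2.mem_and_mem_iff h.ne).mp ⟨hu, hv⟩)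
    have he' : e ∈ G.edgeSet \ {s(u₀,v₀)} := by
      have := SimpleGraph.mem_edgeFinset.mp he
      rwa [SimpleGraph.edgeSet_deleteEdges] at this
    exact he'.2 (by simp [he₀])
  have hrest_filter : (G.deleteEdges {s(u₀,v₀)}).edgeFinset.filter (fun e => ¬ u₀ ∈ e ∧ ¬ v₀ ∈ e)
      = G.edgeFinset.filter (fun e => ¬ u₀ ∈ e ∧ ¬ v₀ ∈ e) := by
    ext e
    simp only [mem_filter, SimpleGraph.mem_edgeFinset, SimpleGraph.edgeSet_deleteEdges,
      Set.mem_diff, Set.mem_singleton_iff]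
    constructor
    · rintro ⟨⟨he, _⟩, hq⟩; exact ⟨he, hq⟩
    · rintro ⟨he, hq⟩
      exact ⟨⟨he, fun h0 => hq.1 (by rw [h0]; simp)⟩, hq⟩
  rw [hv_filter, hrest_filter]
  -- split the contracted side
  rw [← Finset.prod_filter_mul_prod_filter_not (contractSD G u₀ v₀).edgeFinset
      (fun e => none ∈ e) (ww (resc u₀ v₀ c))]
  -- the "rest" parts agree
  have hrest : ∏ e ∈ G.edgeFinset.filter (fun e => ¬ u₀ ∈ e ∧ ¬ v₀ ∈ e), ww c e
      = ∏ e ∈ (contractSD G u₀ v₀).edgeFinset.filter (fun e => ¬ (none ∈ e)),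
          ww (resc u₀ v₀ c) e := by
    rw [← rest_image G u₀ v₀, Finset.prod_image (rest_injOn G u₀ v₀)]
    refine Finset.prod_congr rfl fun e' he' => ?_
    simp only [mem_filter, SimpleGraph.mem_edgeFinset, SimpleGraph.mem_edgeSet] at he'
    obtain ⟨hadj, hnone⟩ := he'
    induction e' with
    | _ x y =>
      rcases x with _ | a
      · exact absurd (by simp) hnone
      rcases y with _ | b
      · exact absurd (by simp) hnone
      have hab : a.1 ≠ b.1 := (hadj : G.Adj a.1 b.1).ne
      have hab' : (some a : Option {x : V // x ≠ u₀ ∧ x ≠ v₀}) ≠ some b := by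
        intro hh
        exact hab (congrArg (Option.elim · u₀ Subtype.val) hh)
      rw [show Sym2.map (fup u₀ v₀) s(some a, some b) = s(a.1, b.1) from rfl,
        ww_mk c hab, ww_mk (resc u₀ v₀ c) hab']
      rfl
  -- the incidence parts
  have hu_inc : ∏ e ∈ (G.deleteEdges {s(u₀,v₀)}).edgeFinset.filter (fun e => u₀ ∈ e), ww c e
      = ∏ b ∈ (G.neighborFinset u₀).erase v₀, (if c u₀ = c b then (1:ℚ) else -1) := by
    rw [prod_edges_at, deleteEdges_nbr_u G u₀ v₀ h]
  have hv_inc : ∏ e ∈ (G.deleteEdges {s(u₀,v₀)}).edgeFinset.filter (fun e => v₀ ∈ e), ww c e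
      = ∏ b ∈ (G.neighborFinset v₀).erase u₀, (if c u₀ = c b then (1:ℚ) else -1) := by
    rw [prod_edges_at, deleteEdges_nbr_v G u₀ v₀ h, hc]
  have hnone_inc : ∏ e ∈ (contractSD G u₀ v₀).edgeFinset.filter (fun e => none ∈ e),
        ww (resc u₀ v₀ c) e
      = ∏ b ∈ univ.filter (fun b => b ≠ u₀ ∧ b ≠ v₀ ∧ Xor' (G.Adj b u₀) (G.Adj b v₀)),
          (if c u₀ = c b then (1:ℚ) else -1) := by
    rw [prod_edges_at, neighborFinset_none, Finset.prod_image
      (fun x _ y _ hxy => Option.some_injective _ hxy)]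
    rw [← image_val_xor G u₀ v₀, Finset.prod_image
      (fun x _ y _ hxy => Subtype.val_injective hxy)]
    rfl
  rw [hu_inc, hv_inc, hnone_inc, hrest,
    ← nbr_prod G u₀ v₀ (fun b => if c u₀ = c b then (1:ℚ) else -1)
      (fun b => by split <;> norm_num)]
  ring

lemma key_sum (h : G.Adj u₀ v₀) :
    (∑ c : V → Fin 3, ∏ e ∈ G.edgeFinset, ww c e)
      + ∑ c : V → Fin 3, ∏ e ∈ (G.deleteEdges {s(u₀,v₀)}).edgeFinset, ww c e
    = 2 * ∑ c' : Option {x : V // x ≠ u₀ ∧ x ≠ v₀} → Fin 3,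
        ∏ e ∈ (contractSD G u₀ v₀).edgeFinset, ww c' e := by
  classical
  have he₀ : s(u₀, v₀) ∈ G.edgeFinset := by
    rw [SimpleGraph.mem_edgeFinset, SimpleGraph.mem_edgeSet]; exact h
  have hE : (G.deleteEdges {s(u₀,v₀)}).edgeFinset = G.edgeFinset.erase s(u₀,v₀) := by
    ext e
    simp only [SimpleGraph.mem_edgeFinset, SimpleGraph.edgeSet_deleteEdges, Set.mem_diff,
      Set.mem_singleton_iff, mem_erase]
    tauto
  have step1 : (∑ c : V → Fin 3, ∏ e ∈ G.edgeFinset, ww c e)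
      + ∑ c : V → Fin 3, ∏ e ∈ (G.deleteEdges {s(u₀,v₀)}).edgeFinset, ww c e
      = ∑ c ∈ (univ : Finset (V → Fin 3)).filter (fun c => c u₀ = c v₀),
          2 * ∏ e ∈ G.edgeFinset.erase s(u₀,v₀), ww c e := by
    rw [hE, ← Finset.sum_add_distrib]
    rw [Finset.sum_filter]
    refine Finset.sum_congr rfl fun c _ => ?_
    rw [← Finset.mul_prod_erase _ _ he₀]
    have : ww c s(u₀,v₀) = if c u₀ = c v₀ then 1 else -1 := ww_mk c h.ne
    rw [this]
    split <;> ring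
  rw [step1, Finset.mul_sum]
  refine Finset.sum_bij' (fun c _ => resc u₀ v₀ c) (fun c' _ => extc u₀ v₀ c')
    ?_ ?_ ?_ ?_ ?_
  · intro c _; exact mem_univ _
  · intro c' _
    simp [extc]
  · intro c hc
    simp only [mem_filter, mem_univ, true_and] at hc
    funext v
    by_cases hv : v = u₀ ∨ v = v₀
    · simp only [extc]
      rw [dif_pos hv]
      rcases hv with rfl | rfl
      · rfl
      · exact hc
    · simp only [extc]
      rw [dif_neg hv]
      rfl
  · intro c' _
    funext x
    rcases x with _ | a
    · show extc u₀ v₀ c' u₀ = c' none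
      simp [extc]
    · show extc u₀ v₀ c' a.1 = c' (some a)
      simp [extc, a.2.1, a.2.2]
  · intro c hcm
    simp only [mem_filter, mem_univ, true_and] at hcm
    rw [← hE, prod_key G u₀ v₀ h c hcm]

lemma card_aux (h : G.Adj u₀ v₀) :
    Fintype.card V = Fintype.card {x : V // x ≠ u₀ ∧ x ≠ v₀} + 2 := by
  classical
  rw [Fintype.card_subtype]
  have hsplit := Finset.card_filter_add_card_filter_not
    (s := (univ : Finset V)) (p := fun x => x ≠ u₀ ∧ x ≠ v₀)
  have hneg : (univ : Finset V).filter (fun x => ¬(x ≠ u₀ ∧ x ≠ v₀)) = {u₀, v₀} := by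
    ext x
    simp only [mem_filter, mem_univ, true_and, not_and_or, not_ne_iff, mem_insert,
      Finset.mem_singleton]
  have hcard2 : ({u₀, v₀} : Finset V).card = 2 := by
    rw [Finset.card_insert_of_notMem (by simp [h.ne]), Finset.card_singleton]
  rw [hneg, hcard2, Finset.card_univ] at hsplit
  omega

end Main

theorem phi_deletion_contraction (G : SimpleGraph V) [DecidableRel G.Adj]
    (u₀ v₀ : V) (h : G.Adj u₀ v₀) :
    phi G = -phi (G.deleteEdges {s(u₀, v₀)}) + (1 / 4) * phi (contractSD G u₀ v₀) := by
  classical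
  have hm := card_aux G u₀ v₀ h
  have hkey := key_sum G u₀ v₀ h
  rw [phi_eq, phi_eq, phi_eq, hm, Fintype.card_option]
  set m := Fintype.card {x : V // x ≠ u₀ ∧ x ≠ v₀} with hmdef
  set S1 := ∑ c : V → Fin 3, ∏ e ∈ G.edgeFinset, ww c e with hS1
  set S2 := ∑ c : V → Fin 3, ∏ e ∈ (G.deleteEdges {s(u₀,v₀)}).edgeFinset, ww c e with hS2
  set S3 := ∑ c' : Option {x : V // x ≠ u₀ ∧ x ≠ v₀} → Fin 3,
      ∏ e ∈ (contractSD G u₀ v₀).edgeFinset, ww c' e with hS3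
  have hpow : (2:ℚ) ^ (3*(m+2)) = 8 * 2 ^ (3*(m+1)) := by
    rw [show 3*(m+2) = 3*(m+1) + 3 by ring, pow_add]; ring
  have hX : (2:ℚ) ^ (3*(m+1)) ≠ 0 := pow_ne_zero _ two_ne_zero
  rw [hpow]
  have hkey' : S1 + S2 = 2 * S3 := hkey
  rw [mul_inv]
  linear_combination (8:ℚ)⁻¹ * ((2:ℚ)^(3*(m+1)))⁻¹ * hkey'
end

section
/- Leaf deletion for φ: if G is a finite simple graph with a vertex v of degree 1, and G' is the graph obtained by deleting v and its incident edge, then φ(G) = -(1/8)·φ(G') = (3/8 - 1/2)·φ(G'). -/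
open Finset

variable {V : Type*} [Fintype V] [DecidableEq V]

instance (G : SimpleGraph V) [DecidableRel G.Adj] (s : Set V) :
    DecidableRel (G.induce s).Adj := fun a b =>
  inferInstanceAs (Decidable (G.Adj a.1 b.1))


lemma prop_pair (c : V → Fin 3) (x y : V) :
    (∀ a ∈ s(x,y), ∀ b ∈ s(x,y), a ≠ b → c a ≠ c b) ↔ (x ≠ y → c x ≠ c y) := by
  constructor
  · intro H hxy; exact H x (by simp) y (by simp) hxy
  · intro H a ha b hb hab
    rw [Sym2.mem_iff] at ha hb
    rcases ha with rfl | rfl <;> rcases hb with rfl | rfl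
    · exact absurd rfl hab
    · exact H hab
    · exact fun hc => H hab.symm hc.symm
    · exact absurd rfl hab

lemma sum_ite_fin3 (a : Fin 3) : ∑ k : Fin 3, (if a ≠ k then (-1 : ℚ) else 1) = -1 := by
  fin_cases a <;> simp [Fin.sum_univ_three] <;> norm_num

lemma chi3E_cast {W : Type*} [Fintype W] [DecidableEq W] (E' : Finset (Sym2 W)) :
    (chi3E W E' : ℚ) =
      ∑ c : W → Fin 3,
        (if ∀ e ∈ E', ∀ u ∈ e, ∀ w ∈ e, u ≠ w → c u ≠ c w then (1 : ℚ) else 0) := by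
  rw [chi3E, Finset.card_filter]
  push_cast
  rfl

lemma sum_powerset_eq {W : Type*} [Fintype W] [DecidableEq W] (S : Finset (Sym2 W)) :
    ∑ E' ∈ S.powerset, (-2 : ℚ) ^ E'.card * chi3E W E'
      = ∑ c : W → Fin 3, ∏ e ∈ S,
          (if ∀ u ∈ e, ∀ w ∈ e, u ≠ w → c u ≠ c w then (-1 : ℚ) else 1) := by
  have key : ∀ c : W → Fin 3, ∀ E' ∈ S.powerset,
      (-2 : ℚ) ^ E'.card *
        (if ∀ e ∈ E', ∀ u ∈ e, ∀ w ∈ e, u ≠ w → c u ≠ c w then (1 : ℚ) else 0)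
      = ∏ e ∈ E', (if ∀ u ∈ e, ∀ w ∈ e, u ≠ w → c u ≠ c w then (-2 : ℚ) else 0) := by
    intro c E' _
    by_cases h : ∀ e ∈ E', ∀ u ∈ e, ∀ w ∈ e, u ≠ w → c u ≠ c w
    · rw [if_pos h, mul_one, Finset.prod_congr rfl (fun e he => if_pos (h e he)),
        Finset.prod_const]
    · push_neg at h
      obtain ⟨e, he, hne⟩ := h
      have h1 : ¬ ∀ u ∈ e, ∀ w ∈ e, u ≠ w → c u ≠ c w := by push_neg; exact hne
      have h2 : ¬ ∀ e' ∈ E', ∀ u ∈ e', ∀ w ∈ e', u ≠ w → c u ≠ c w := by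
        push_neg; exact ⟨e, he, hne⟩
      rw [if_neg h2, mul_zero]
      exact (Finset.prod_eq_zero (f := fun e =>
        if ∀ u ∈ e, ∀ w ∈ e, u ≠ w → c u ≠ c w then (-2 : ℚ) else 0) he (if_neg h1)).symm
  calc ∑ E' ∈ S.powerset, (-2 : ℚ) ^ E'.card * chi3E W E'
      = ∑ E' ∈ S.powerset, ∑ c : W → Fin 3, (-2 : ℚ) ^ E'.card *
          (if ∀ e ∈ E', ∀ u ∈ e, ∀ w ∈ e, u ≠ w → c u ≠ c w then (1 : ℚ) else 0) := by
        refine Finset.sum_congr rfl fun E' _ => ?_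
        rw [chi3E_cast, Finset.mul_sum]
    _ = ∑ c : W → Fin 3, ∑ E' ∈ S.powerset,
          ∏ e ∈ E', (if ∀ u ∈ e, ∀ w ∈ e, u ≠ w → c u ≠ c w then (-2 : ℚ) else 0) := by
        rw [Finset.sum_comm]
        exact Finset.sum_congr rfl fun c _ => Finset.sum_congr rfl (key c)
    _ = ∑ c : W → Fin 3, ∏ e ∈ S,
          (if ∀ u ∈ e, ∀ w ∈ e, u ≠ w → c u ≠ c w then (-1 : ℚ) else 1) := by
        refine Finset.sum_congr rfl fun c _ => ?_
        have := Finset.prod_add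
          (fun e : Sym2 W => if ∀ u ∈ e, ∀ w ∈ e, u ≠ w → c u ≠ c w then (-2 : ℚ) else 0)
          (fun _ => (1 : ℚ)) S
        simp only [Finset.prod_const_one, mul_one] at this
        rw [← this]
        refine Finset.prod_congr rfl fun e _ => ?_
        split <;> norm_num


/-- Colorings of `V` correspond to (coloring of `V \ {v}`, color of `v`). -/
def colEquiv (v : V) : (({x : V | x ≠ v} : Set V) → Fin 3) × Fin 3 ≃ (V → Fin 3) where
  toFun p x := if h : x = v then p.2 else p.1 ⟨x, h⟩
  invFun c := (fun a => c a.1, c v)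
  left_inv p := by
    ext a
    · simp only
      rw [dif_neg a.2]
    · simp
  right_inv c := by
    funext x
    by_cases h : x = v
    · subst h; simp
    · simp [dif_neg h]

lemma image_edgeFinset (G : SimpleGraph V) [DecidableRel G.Adj] (v u : V)
    (hadj : G.Adj v u) (huniq : ∀ w, G.Adj v w → w = u) :
    (SimpleGraph.edgeFinset (G.induce {x : V | x ≠ v})).image (Sym2.map Subtype.val)
      = G.edgeFinset.erase s(u, v) := by
  ext e
  simp only [Finset.mem_image, Finset.mem_erase, SimpleGraph.mem_edgeFinset]
  constructor
  · rintro ⟨e', he', rfl⟩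
    induction e' using Sym2.ind with
    | _ a b =>
      rw [SimpleGraph.mem_edgeSet] at he'
      have hab : G.Adj a.1 b.1 := he'
      rw [Sym2.map_pair_eq]
      refine ⟨?_, hab⟩
      intro hcontra
      have hv : v ∈ s(a.1, b.1) := by rw [hcontra]; simp [Sym2.mem_iff]
      rw [Sym2.mem_iff] at hv
      rcases hv with hv | hv
      · exact a.2 hv.symm
      · exact b.2 hv.symm
  · intro ⟨hne, he⟩
    induction e using Sym2.ind with
    | _ x y =>
      rw [SimpleGraph.mem_edgeSet] at he
      have hx : x ≠ v := by
        rintro rfl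
        have := huniq y he
        subst this
        exact hne (Sym2.eq_swap)
      have hy : y ≠ v := by
        rintro rfl
        have := huniq x he.symm
        subst this
        exact hne rfl
      refine ⟨s(⟨x, hx⟩, ⟨y, hy⟩), ?_, by rw [Sym2.map_pair_eq]⟩
      rw [SimpleGraph.mem_edgeSet]
      exact he



theorem phi_leaf_deletion (G : SimpleGraph V) [DecidableRel G.Adj] (v : V)
    (h : G.degree v = 1) :
    phi G = -(1 / 8) * phi (G.induce {x : V | x ≠ v}) ∧
      phi G = ((3 : ℚ) / 8 - 1 / 2) * phi (G.induce {x : V | x ≠ v}) := by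
  obtain ⟨u, hu⟩ : ∃ u, G.neighborFinset v = {u} := Finset.card_eq_one.mp h
  have hadj : G.Adj v u := by
    have : u ∈ G.neighborFinset v := by rw [hu]; exact Finset.mem_singleton_self u
    exact (SimpleGraph.mem_neighborFinset G v u).mp this
  have huniq : ∀ w, G.Adj v w → w = u := by
    intro w hw
    have : w ∈ G.neighborFinset v := (SimpleGraph.mem_neighborFinset G v w).mpr hw
    rw [hu] at this; exact Finset.mem_singleton.mp this
  have hne : u ≠ v := hadj.ne'
  have he0 : s(u, v) ∈ G.edgeFinset := by
    rw [SimpleGraph.mem_edgeFinset, SimpleGraph.mem_edgeSet]; exact hadj.symm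
  -- the key sum identity
  have hmain : ∑ E' ∈ G.edgeFinset.powerset, (-2 : ℚ) ^ E'.card * chi3E V E'
      = -1 * ∑ E' ∈ (G.induce {x : V | x ≠ v}).edgeFinset.powerset,
          (-2 : ℚ) ^ E'.card * chi3E _ E' := by
    rw [sum_powerset_eq, sum_powerset_eq]
    rw [← Equiv.sum_comp (colEquiv v) (fun c => ∏ e ∈ G.edgeFinset,
      (if ∀ x ∈ e, ∀ y ∈ e, x ≠ y → c x ≠ c y then (-1 : ℚ) else 1))]
    rw [Fintype.sum_prod_type]
    rw [Finset.mul_sum]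
    refine Finset.sum_congr rfl fun c' _ => ?_
    -- split off the leaf edge
    have hsplit : ∀ k : Fin 3,
        ∏ e ∈ G.edgeFinset,
          (if ∀ x ∈ e, ∀ y ∈ e, x ≠ y → (colEquiv v (c', k)) x ≠ (colEquiv v (c', k)) y
            then (-1 : ℚ) else 1)
        = (if c' ⟨u, hne⟩ ≠ k then (-1 : ℚ) else 1) *
          ∏ e' ∈ (G.induce {x : V | x ≠ v}).edgeFinset,
            (if ∀ x ∈ e', ∀ y ∈ e', x ≠ y → c' x ≠ c' y then (-1 : ℚ) else 1) := by
      intro k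
      rw [← Finset.mul_prod_erase _ _ he0]
      congr 1
      · -- leaf edge factor
        have hc1 : (colEquiv v (c', k)) u = c' ⟨u, hne⟩ := by
          show (if h : u = v then k else c' ⟨u, h⟩) = _
          rw [dif_neg hne]
        have hc2 : (colEquiv v (c', k)) v = k := by
          show (if h : v = v then k else c' ⟨v, h⟩) = _
          rw [dif_pos rfl]
        have hiff : (∀ x ∈ s(u, v), ∀ y ∈ s(u, v), x ≠ y →
            (colEquiv v (c', k)) x ≠ (colEquiv v (c', k)) y) ↔ c' ⟨u, hne⟩ ≠ k := by
          rw [prop_pair, hc1, hc2]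
          exact ⟨fun H => H hne, fun H _ => H⟩
        simp only [hiff]
      · -- the rest
        rw [← image_edgeFinset G v u hadj huniq,
          Finset.prod_image (fun x _ y _ hxy =>
            Sym2.map.injective Subtype.val_injective hxy)]
        refine Finset.prod_congr rfl fun e' _ => ?_
        induction e' using Sym2.ind with
        | _ a b =>
          rw [Sym2.map_pair_eq]
          have hca : (colEquiv v (c', k)) a.1 = c' a := by
            show (if h : a.1 = v then k else c' ⟨a.1, h⟩) = _
            rw [dif_neg a.2]
          have hcb : (colEquiv v (c', k)) b.1 = c' b := by
            show (if h : b.1 = v then k else c' ⟨b.1, h⟩) = _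
            rw [dif_neg b.2]
          have hiff : (∀ x ∈ s(a.1, b.1), ∀ y ∈ s(a.1, b.1), x ≠ y →
              (colEquiv v (c', k)) x ≠ (colEquiv v (c', k)) y) ↔
              (∀ x ∈ s(a, b), ∀ y ∈ s(a, b), x ≠ y → c' x ≠ c' y) := by
            rw [prop_pair, prop_pair, hca, hcb]
            constructor
            · intro H hab; exact H (fun hv => hab (Subtype.ext hv))
            · intro H hab; exact H (fun hv => hab (congrArg Subtype.val hv))
          simp only [hiff]
    calc ∑ k : Fin 3, ∏ e ∈ G.edgeFinset,
          (if ∀ x ∈ e, ∀ y ∈ e, x ≠ y → (colEquiv v (c', k)) x ≠ (colEquiv v (c', k)) y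
            then (-1 : ℚ) else 1)
        = ∑ k : Fin 3, (if c' ⟨u, hne⟩ ≠ k then (-1 : ℚ) else 1) *
          ∏ e' ∈ (G.induce {x : V | x ≠ v}).edgeFinset,
            (if ∀ x ∈ e', ∀ y ∈ e', x ≠ y → c' x ≠ c' y then (-1 : ℚ) else 1) :=
          Finset.sum_congr rfl fun k _ => hsplit k
      _ = -1 * ∏ e' ∈ (G.induce {x : V | x ≠ v}).edgeFinset,
            (if ∀ x ∈ e', ∀ y ∈ e', x ≠ y → c' x ≠ c' y then (-1 : ℚ) else 1) := by
          rw [← Finset.sum_mul, sum_ite_fin3]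
  -- cardinality
  have hpos : 1 ≤ Fintype.card V := Fintype.card_pos_iff.mpr ⟨v⟩
  have hm : Fintype.card ({x : V | x ≠ v} : Set V) = Fintype.card V - 1 := by
    rw [← Set.toFinset_card]
    have : ({x : V | x ≠ v} : Set V).toFinset = Finset.univ.erase v := by
      ext x; simp [Finset.mem_erase]
    rw [this, Finset.card_erase_of_mem (Finset.mem_univ v), Finset.card_univ]
  have hcardV : Fintype.card V = Fintype.card ({x : V | x ≠ v} : Set V) + 1 := by omega
  have h1 : phi G = -(1 / 8) * phi (G.induce {x : V | x ≠ v}) := by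
    rw [phi, phi, hmain, hcardV]
    rw [show 3 * (Fintype.card ({x : V | x ≠ v} : Set V) + 1)
      = 3 * Fintype.card ({x : V | x ≠ v} : Set V) + 3 by ring, pow_add]
    rw [mul_inv]
    ring
  exact ⟨h1, by rw [h1]; norm_num⟩
end
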